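/- (End-to-end acceptance-rate bound under top-K compression) Let q be the draft distribution, and for each worker i ∈ {1,…,M} let p_i be a probability distribution on finite V, S_i ⊆ V a subset with residual mass ε_i = ∑_{x∉S_i} p_i(x), and p'_i either the renormalized reconstruction (requiring ∑_{x∈S_i} p_i(x) > 0) or the residual-mass-redistribution reconstruction. Let w_i ≥ 0 with ∑_i w_i = 1, and set p̄ = ∑_i w_i p_i, p̄' = ∑_i w_i p'_i. Then |∑_{x∈V} min(p̄'(x), q(x)) - ∑_{x∈V} min(p̄(x), q(x))| ≤ ∑_i w_i ε_i. -/
import Mathlib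

lemma aux_recon {V : Type*} [Fintype V] [DecidableEq V] (p p' : V → ℝ) (S : Finset V)
    (hp : ∀ x, 0 ≤ p x) (hps : ∑ x, p x = 1)
    (h : (0 < (∑ y ∈ S, p y) ∧
        ∀ x, p' x = if x ∈ S then p x / (∑ y ∈ S, p y) else 0) ∨
      (S.card < Fintype.card V ∧
        ∀ x, p' x = if x ∈ S then p x
          else (∑ y ∈ Sᶜ, p y) / (Fintype.card V - S.card : ℝ))) :
    (∑ x, p' x = 1) ∧ (∑ x, |p' x - p x| ≤ 2 * ∑ y ∈ Sᶜ, p y) := by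
  have hsplit : ∑ x ∈ S, p x + ∑ x ∈ Sᶜ, p x = 1 := by
    rw [Finset.sum_add_sum_compl]; exact hps
  have hεnn : 0 ≤ ∑ y ∈ Sᶜ, p y := Finset.sum_nonneg fun y _ => hp y
  rcases h with ⟨hρ, hdef⟩ | ⟨hcard, hdef⟩
  · have hρ1 : ∑ y ∈ S, p y ≤ 1 := by linarith
    constructor
    · calc ∑ x, p' x = ∑ x ∈ S, p' x + ∑ x ∈ Sᶜ, p' x :=
            (Finset.sum_add_sum_compl S p').symm
        _ = ∑ x ∈ S, p x / (∑ y ∈ S, p y) + 0 := by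
            congr 1
            · exact Finset.sum_congr rfl fun x hx => by rw [hdef]; simp [hx]
            · exact Finset.sum_eq_zero fun x hx => by
                rw [hdef]; simp [Finset.mem_compl.mp hx]
        _ = 1 := by rw [add_zero, ← Finset.sum_div, div_self hρ.ne']
    · have key : ∑ x, |p' x - p x|
          = ∑ x ∈ S, |p' x - p x| + ∑ x ∈ Sᶜ, |p' x - p x| :=
        (Finset.sum_add_sum_compl S _).symm
      rw [key]
      have h1 : ∑ x ∈ S, |p' x - p x| = ∑ y ∈ Sᶜ, p y := by
        have : ∀ x ∈ S, |p' x - p x| = p x / (∑ y ∈ S, p y) - p x := by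
          intro x hx
          rw [hdef, if_pos hx, abs_of_nonneg]
          have : p x ≤ p x / (∑ y ∈ S, p y) := by
            rw [le_div_iff₀ hρ]
            nlinarith [hp x]
          linarith
        rw [Finset.sum_congr rfl this, Finset.sum_sub_distrib, ← Finset.sum_div,
          div_self hρ.ne']
        linarith
      have h2 : ∑ x ∈ Sᶜ, |p' x - p x| = ∑ y ∈ Sᶜ, p y := by
        refine Finset.sum_congr rfl fun x hx => ?_
        rw [hdef, if_neg (Finset.mem_compl.mp hx)]
        rw [zero_sub, abs_neg, abs_of_nonneg (hp x)]
      rw [h1, h2]; ring_nf; linarith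
  · have hle : S.card ≤ Fintype.card V := hcard.le
    have hpos : (0 : ℝ) < (Fintype.card V : ℝ) - S.card := by
      have : (S.card : ℝ) < Fintype.card V := by exact_mod_cast hcard
      linarith
    have hcompl : ((Sᶜ : Finset V).card : ℝ) = (Fintype.card V : ℝ) - S.card := by
      rw [Finset.card_compl]
      push_cast [Nat.cast_sub hle]
      ring
    constructor
    · calc ∑ x, p' x = ∑ x ∈ S, p' x + ∑ x ∈ Sᶜ, p' x :=
            (Finset.sum_add_sum_compl S p').symm
        _ = ∑ x ∈ S, p x + ∑ x ∈ Sᶜ, ((∑ y ∈ Sᶜ, p y) / ((Fintype.card V : ℝ) - S.card)) := by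
            congr 1
            · exact Finset.sum_congr rfl fun x hx => by rw [hdef]; simp [hx]
            · exact Finset.sum_congr rfl fun x hx => by
                rw [hdef]; simp [Finset.mem_compl.mp hx]
        _ = 1 := by
            rw [Finset.sum_const, nsmul_eq_mul, hcompl,
              mul_div_cancel₀ _ hpos.ne']
            linarith
    · have key : ∑ x, |p' x - p x|
          = ∑ x ∈ S, |p' x - p x| + ∑ x ∈ Sᶜ, |p' x - p x| :=
        (Finset.sum_add_sum_compl S _).symm
      rw [key]
      have h1 : ∑ x ∈ S, |p' x - p x| = 0 :=
        Finset.sum_eq_zero fun x hx => by rw [hdef, if_pos hx]; simp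
      have h2 : ∑ x ∈ Sᶜ, |p' x - p x| ≤ 2 * ∑ y ∈ Sᶜ, p y := by
        have hb : ∀ x ∈ Sᶜ, |p' x - p x|
            ≤ (∑ y ∈ Sᶜ, p y) / ((Fintype.card V : ℝ) - S.card) + p x := by
          intro x hx
          rw [hdef, if_neg (Finset.mem_compl.mp hx)]
          have h0 : 0 ≤ (∑ y ∈ Sᶜ, p y) / ((Fintype.card V : ℝ) - S.card) :=
            div_nonneg hεnn hpos.le
          rw [abs_sub_le_iff]
          constructor <;> nlinarith [hp x]
        calc ∑ x ∈ Sᶜ, |p' x - p x|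
            ≤ ∑ x ∈ Sᶜ, ((∑ y ∈ Sᶜ, p y) / ((Fintype.card V : ℝ) - S.card) + p x) :=
              Finset.sum_le_sum hb
          _ = 2 * ∑ y ∈ Sᶜ, p y := by
              rw [Finset.sum_add_distrib, Finset.sum_const, nsmul_eq_mul, hcompl,
                mul_div_cancel₀ _ hpos.ne']
              ring
      linarith

/-- End-to-end acceptance-rate bound under top-K compression. -/
theorem stmt_8 {V : Type*} [Fintype V] [DecidableEq V] {ι : Type*} [Fintype ι]
    (q : V → ℝ) (hq : ∀ x, 0 ≤ q x) (hqs : ∑ x, q x = 1)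
    (p p' : ι → V → ℝ) (S : ι → Finset V) (w : ι → ℝ)
    (hp : ∀ i x, 0 ≤ p i x) (hps : ∀ i, ∑ x, p i x = 1)
    (hw : ∀ i, 0 ≤ w i) (hws : ∑ i, w i = 1)
    (hrec : ∀ i,
      (0 < (∑ y ∈ S i, p i y) ∧
        ∀ x, p' i x = if x ∈ S i then p i x / (∑ y ∈ S i, p i y) else 0) ∨
      ((S i).card < Fintype.card V ∧
        ∀ x, p' i x = if x ∈ S i then p i x
          else (∑ y ∈ (S i)ᶜ, p i y) / (Fintype.card V - (S i).card : ℝ))) :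
    |(∑ x, min (∑ i, w i * p' i x) (q x)) - (∑ x, min (∑ i, w i * p i x) (q x))|
      ≤ ∑ i, w i * ∑ y ∈ (S i)ᶜ, p i y := by
  have haux := fun i => aux_recon (p i) (p' i) (S i) (hp i) (hps i) (hrec i)
  set A : V → ℝ := fun x => ∑ i, w i * p' i x with hA
  set B : V → ℝ := fun x => ∑ i, w i * p i x with hB
  have hAs : ∑ x, A x = 1 := by
    rw [Finset.sum_comm]
    simp_rw [← Finset.mul_sum]
    calc ∑ i, w i * ∑ x, p' i x = ∑ i, w i := by
          refine Finset.sum_congr rfl fun i _ => by rw [(haux i).1, mul_one]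
      _ = 1 := hws
  have hBs : ∑ x, B x = 1 := by
    rw [Finset.sum_comm]
    simp_rw [← Finset.mul_sum]
    calc ∑ i, w i * ∑ x, p i x = ∑ i, w i := by
          refine Finset.sum_congr rfl fun i _ => by rw [hps i, mul_one]
      _ = 1 := hws
  have hmin : ∀ a b : ℝ, min a b = (a + b - |a - b|) / 2 := by
    intro a b
    rcases le_total a b with h | h
    · rw [min_eq_left h, abs_of_nonpos (by linarith)]; ring
    · rw [min_eq_right h, abs_of_nonneg (by linarith)]; ring
  have hexp : ∀ f : V → ℝ, ∑ x, min (f x) (q x)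
      = ((∑ x, f x) + (∑ x, q x) - ∑ x, |f x - q x|) / 2 := by
    intro f
    simp_rw [hmin]
    rw [← Finset.sum_div]
    congr 1
    rw [Finset.sum_sub_distrib, Finset.sum_add_distrib]
  have hL1 : ∑ x, |A x - B x| ≤ 2 * ∑ i, w i * ∑ y ∈ (S i)ᶜ, p i y := by
    have step : ∀ x, |A x - B x| ≤ ∑ i, w i * |p' i x - p i x| := by
      intro x
      rw [hA, hB, ← Finset.sum_sub_distrib]
      refine (Finset.abs_sum_le_sum_abs _ _).trans (le_of_eq ?_)
      refine Finset.sum_congr rfl fun i _ => ?_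
      rw [← mul_sub, abs_mul, abs_of_nonneg (hw i)]
    calc ∑ x, |A x - B x| ≤ ∑ x, ∑ i, w i * |p' i x - p i x| :=
          Finset.sum_le_sum fun x _ => step x
      _ = ∑ i, w i * ∑ x, |p' i x - p i x| := by
          rw [Finset.sum_comm]; simp_rw [Finset.mul_sum]
      _ ≤ ∑ i, w i * (2 * ∑ y ∈ (S i)ᶜ, p i y) :=
          Finset.sum_le_sum fun i _ => mul_le_mul_of_nonneg_left (haux i).2 (hw i)
      _ = 2 * ∑ i, w i * ∑ y ∈ (S i)ᶜ, p i y := by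
          rw [Finset.mul_sum]; exact Finset.sum_congr rfl fun i _ => by ring
  have hdiff : (∑ x, min (A x) (q x)) - (∑ x, min (B x) (q x))
      = ((∑ x, |B x - q x|) - ∑ x, |A x - q x|) / 2 := by
    rw [hexp A, hexp B, hAs, hBs]; ring
  rw [hdiff]
  have hbnd : |(∑ x, |B x - q x|) - (∑ x, |A x - q x|)| ≤ ∑ x, |A x - B x| := by
    rw [← Finset.sum_sub_distrib]
    refine (Finset.abs_sum_le_sum_abs _ _).trans (Finset.sum_le_sum fun x _ => ?_)
    calc |(|B x - q x|) - (|A x - q x|)| ≤ |(B x - q x) - (A x - q x)| :=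
          abs_abs_sub_abs_le_abs_sub _ _
      _ = |A x - B x| := by
          rw [show (B x - q x) - (A x - q x) = B x - A x by ring, abs_sub_comm]
  rw [abs_div]
  have : |(2:ℝ)| = 2 := by norm_num
  rw [this, div_le_iff₀ (by norm_num : (0:ℝ) < 2)]
  linarith
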